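/- Let K = (T, Σ, A) be a KB with closed predicates with T in normal form, let I_c be a core for K, and let str be a non-losing strategy for Bob on I_c. For every type τ over T: if τ is marked by the algorithm Mark(T, Σ, I_c), then there is no finite run w following str with tail(w) = τ. -/

import Mathlib

set_option autoImplicit false
set_option linter.unusedVariables false

/-! # ALCHOI with closed predicates: syntax -/

/-- Basic roles: role names `p` or their inverses `p⁻`. -/
inductive DLRole : Type
  | name : ℕ → DLRole
  | inv : ℕ → DLRole
  deriving DecidableEq

/-- The inverse `r⁻` of a basic role. -/
def DLRole.invert : DLRole → DLRole
  | .name p => .inv p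
  | .inv p => .name p

/-- The underlying role name of a basic role. -/
def DLRole.nameOf : DLRole → ℕ
  | .name p => p
  | .inv p => p

/-- ALCHOI concepts. -/
inductive DLConcept : Type
  | atom : ℕ → DLConcept            -- concept name
  | top : DLConcept
  | bot : DLConcept
  | nom : ℕ → DLConcept             -- nominal {a}
  | neg : DLConcept → DLConcept
  | conj : DLConcept → DLConcept → DLConcept
  | disj : DLConcept → DLConcept → DLConcept
  | ex : DLRole → DLConcept → DLConcept
  | all : DLRole → DLConcept → DLConcept
  deriving DecidableEq

/-- TBox inclusions: concept inclusions and role inclusions. -/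
inductive Inclusion : Type
  | concl : DLConcept → DLConcept → Inclusion
  | rolel : DLRole → DLRole → Inclusion
  deriving DecidableEq

/-- ABox assertions `A(a)`, `p(a,b)` (over concept and role *names*). -/
inductive Assertion : Type
  | ca : ℕ → ℕ → Assertion
  | ra : ℕ → ℕ → ℕ → Assertion
  deriving DecidableEq

abbrev TBox := List Inclusion
abbrev ABox := List Assertion

/-- A closed predicate is a concept name or a role name. -/
inductive ClosedPred : Type
  | cp : ℕ → ClosedPred
  | rp : ℕ → ClosedPred
  deriving DecidableEq

/-- A knowledge base with closed predicates. -/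
structure KB where
  tbox : TBox
  sig : Set ClosedPred
  abox : ABox

/-- Domain elements: named individuals (standard name assumption), fringe
individuals `c^α`, and anonymous elements. -/
inductive Elem : Type
  | ind : ℕ → Elem
  | fringe : ℕ → Inclusion → Elem
  | anon : ℕ → Elem
  deriving DecidableEq

def Elem.isFringe : Elem → Prop
  | .fringe _ _ => True
  | _ => False

/-! # Semantics -/

/-- An interpretation. -/
structure Interp where
  dom : Set Elem
  dom_nonempty : dom.Nonempty
  intC : ℕ → Set Elem
  intR : ℕ → Set (Elem × Elem)
  intI : ℕ → Elem
  intC_sub : ∀ A, intC A ⊆ dom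
  intR_sub : ∀ p, ∀ x ∈ intR p, x.1 ∈ dom ∧ x.2 ∈ dom
  intI_mem : ∀ a, intI a ∈ dom

/-- Extension of a basic role. -/
def Interp.roleExt (I : Interp) : DLRole → Set (Elem × Elem)
  | .name p => I.intR p
  | .inv p => {x | (x.2, x.1) ∈ I.intR p}

/-- Extension of a concept. -/
def Interp.cExt (I : Interp) : DLConcept → Set Elem
  | .atom A => I.intC A
  | .top => I.dom
  | .bot => ∅
  | .nom a => {I.intI a}
  | .neg C => I.dom \ I.cExt C
  | .conj C D => I.cExt C ∩ I.cExt D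
  | .disj C D => I.cExt C ∪ I.cExt D
  | .ex r C => {e | ∃ f, (e, f) ∈ I.roleExt r ∧ f ∈ I.cExt C}
  | .all r C => {e | e ∈ I.dom ∧ ∀ f, (e, f) ∈ I.roleExt r → f ∈ I.cExt C}

def Interp.satIncl (I : Interp) : Inclusion → Prop
  | .concl C D => I.cExt C ⊆ I.cExt D
  | .rolel r s => I.roleExt r ⊆ I.roleExt s

def Interp.satAssert (I : Interp) : Assertion → Prop
  | .ca A a => I.intI a ∈ I.intC A
  | .ra p a b => (I.intI a, I.intI b) ∈ I.intR p

def Interp.satTBox (I : Interp) (T : TBox) : Prop := ∀ α ∈ T, I.satIncl α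

def Interp.satABox (I : Interp) (Ab : ABox) : Prop := ∀ β ∈ Ab, I.satAssert β

/-- `I ⊨_Σ A`: `I` satisfies the ABox, and every membership in a closed
predicate is explicitly asserted. -/
def Interp.satABoxClosed (I : Interp) (sig : Set ClosedPred) (Ab : ABox) : Prop :=
  I.satABox Ab ∧
  (∀ A : ℕ, ClosedPred.cp A ∈ sig → ∀ e ∈ I.intC A,
      ∃ a : ℕ, e = Elem.ind a ∧ Assertion.ca A a ∈ Ab) ∧
  (∀ p : ℕ, ClosedPred.rp p ∈ sig → ∀ x ∈ I.intR p,
      ∃ a b : ℕ, x = (Elem.ind a, Elem.ind b) ∧ Assertion.ra p a b ∈ Ab)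

/-! ## Symbols occurring in a KB -/

def DLConcept.noms : DLConcept → Set ℕ
  | .nom a => {a}
  | .neg C => C.noms
  | .conj C D => C.noms ∪ D.noms
  | .disj C D => C.noms ∪ D.noms
  | .ex _ C => C.noms
  | .all _ C => C.noms
  | _ => ∅

def Inclusion.noms : Inclusion → Set ℕ
  | .concl C D => C.noms ∪ D.noms
  | .rolel _ _ => ∅

def Assertion.inds : Assertion → Set ℕ
  | .ca _ a => {a}
  | .ra _ a b => {a, b}

/-- The individuals occurring in a KB (nominals of the TBox and individuals
of the ABox). -/
def KB.inds (K : KB) : Set ℕ :=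
  (⋃ α ∈ K.tbox, Inclusion.noms α) ∪ ⋃ β ∈ K.abox, Assertion.inds β

def DLConcept.cnames : DLConcept → Set ℕ
  | .atom A => {A}
  | .neg C => C.cnames
  | .conj C D => C.cnames ∪ D.cnames
  | .disj C D => C.cnames ∪ D.cnames
  | .ex _ C => C.cnames
  | .all _ C => C.cnames
  | _ => ∅

def DLConcept.rnames : DLConcept → Set ℕ
  | .neg C => C.rnames
  | .conj C D => C.rnames ∪ D.rnames
  | .disj C D => C.rnames ∪ D.rnames
  | .ex r C => {r.nameOf} ∪ C.rnames
  | .all r C => {r.nameOf} ∪ C.rnames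
  | _ => ∅

def Inclusion.cnames : Inclusion → Set ℕ
  | .concl C D => C.cnames ∪ D.cnames
  | .rolel _ _ => ∅

def Inclusion.rnames : Inclusion → Set ℕ
  | .concl C D => C.rnames ∪ D.rnames
  | .rolel r s => {r.nameOf, s.nameOf}

def TBox.cnames (T : TBox) : Set ℕ := ⋃ α ∈ T, Inclusion.cnames α
def TBox.rnames (T : TBox) : Set ℕ := ⋃ α ∈ T, Inclusion.rnames α

def Assertion.cnames : Assertion → Set ℕ
  | .ca A _ => {A}
  | .ra _ _ _ => ∅

def Assertion.rnames : Assertion → Set ℕ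
  | .ca _ _ => ∅
  | .ra p _ _ => {p}

def KB.cnames (K : KB) : Set ℕ := TBox.cnames K.tbox ∪ ⋃ β ∈ K.abox, Assertion.cnames β
def KB.rnames (K : KB) : Set ℕ := TBox.rnames K.tbox ∪ ⋃ β ∈ K.abox, Assertion.rnames β

/-- An ABox over the given sets of concept names and role names. -/
def ABoxOver (Ab : ABox) (cns rns : Set ℕ) : Prop :=
  ∀ β ∈ Ab, match β with
    | Assertion.ca A _ => A ∈ cns
    | Assertion.ra p _ _ => p ∈ rns

/-- `I ⊨ K` for a KB with closed predicates: the standard name assumption for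
the individuals occurring in `K`, satisfaction of the TBox, and `I ⊨_Σ A`. -/
def isModel (I : Interp) (K : KB) : Prop :=
  (∀ a ∈ K.inds, I.intI a = Elem.ind a ∧ Elem.ind a ∈ I.dom) ∧
  I.satTBox K.tbox ∧
  I.satABoxClosed K.sig K.abox

/-! # Normal form -/

inductive IsBasicConcept : DLConcept → Prop
  | atom (A : ℕ) : IsBasicConcept (.atom A)
  | top : IsBasicConcept .top
  | bot : IsBasicConcept .bot
  | nom (a : ℕ) : IsBasicConcept (.nom a)

inductive IsConjOfBasic : DLConcept → Prop
  | basic {C : DLConcept} : IsBasicConcept C → IsConjOfBasic C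
  | conj {C D : DLConcept} : IsConjOfBasic C → IsConjOfBasic D → IsConjOfBasic (.conj C D)

inductive IsDisjOfBasic : DLConcept → Prop
  | basic {C : DLConcept} : IsBasicConcept C → IsDisjOfBasic C
  | disj {C D : DLConcept} : IsDisjOfBasic C → IsDisjOfBasic D → IsDisjOfBasic (.disj C D)

/-- Inclusions of shape (N1). -/
def IsN1 : Inclusion → Prop
  | .concl C D => IsConjOfBasic C ∧ IsDisjOfBasic D
  | .rolel _ _ => False

/-- The existential inclusion `A ⊑ ∃r.A'` (shape (N2)). -/
def exIncl (A : ℕ) (r : DLRole) (A' : ℕ) : Inclusion :=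
  .concl (.atom A) (.ex r (.atom A'))

def Inclusion.isExistential (α : Inclusion) : Prop := ∃ A r A', α = exIncl A r A'

/-- Inclusions in normal form (N1)--(N4). -/
inductive NormalIncl : Inclusion → Prop
  | n1 {C D : DLConcept} : IsConjOfBasic C → IsDisjOfBasic D → NormalIncl (.concl C D)
  | n2 (A : ℕ) (r : DLRole) (A' : ℕ) : NormalIncl (exIncl A r A')
  | n3 (A : ℕ) (r : DLRole) (A' : ℕ) : NormalIncl (.concl (.atom A) (.all r (.atom A')))
  | n4 (r s : DLRole) : NormalIncl (.rolel r s)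

/-- A TBox in normal form. -/
def NormalTBox (T : TBox) : Prop := ∀ α ∈ T, NormalIncl α

/-! # Role hierarchy and closed roles -/

/-- `r ⊑*_T s`. -/
inductive subRole (T : TBox) : DLRole → DLRole → Prop
  | refl (r : DLRole) : subRole T r r
  | inv {r s : DLRole} : subRole T r s → subRole T r.invert s.invert
  | step {r r₁ s : DLRole} : subRole T r r₁ → Inclusion.rolel r₁ s ∈ T → subRole T r s

/-- `r ∈_T Σ`: `r ⊑*_T s` for some `s` with `s` or `s⁻` in `Σ`. -/
def roleClosed (T : TBox) (sig : Set ClosedPred) (r : DLRole) : Prop :=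
  ∃ s : DLRole, subRole T r s ∧ ClosedPred.rp s.nameOf ∈ sig
/-! # Conjunctive queries -/

/-- Query atoms `A(x)`, `r(x,y)` over variables. -/
inductive QAtom : Type
  | ca : ℕ → ℕ → QAtom
  | ra : ℕ → ℕ → ℕ → QAtom
  deriving DecidableEq

def QAtom.vars : QAtom → Set ℕ
  | .ca _ x => {x}
  | .ra _ x y => {x, y}

/-- Variables of a set of atoms. -/
def qvarsS (s : Set QAtom) : Set ℕ := ⋃ a ∈ s, QAtom.vars a

/-- A conjunctive query with answer variables `ansVars`; all remaining
variables are existentially quantified. -/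
structure CQuery where
  atoms : List QAtom
  ansVars : List ℕ
  ansVars_mem : ∀ x ∈ ansVars, x ∈ qvarsS {a | a ∈ atoms}

def CQuery.atomSet (q : CQuery) : Set QAtom := {a | a ∈ q.atoms}
def CQuery.varSet (q : CQuery) : Set ℕ := qvarsS q.atomSet

def QAtom.satBy : QAtom → Interp → (ℕ → Elem) → Prop
  | .ca A x, I, π => π x ∈ I.intC A
  | .ra p x y, I, π => (π x, π y) ∈ I.intR p

/-- `I ⊨ q(t)` for a tuple `t` of domain elements: some map `π` of the
variables into the domain sends the answer tuple to `t` and satisfies all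
atoms. -/
def Interp.satCQ (I : Interp) (q : CQuery) (t : List Elem) : Prop :=
  ∃ π : ℕ → Elem, (∀ v ∈ q.varSet, π v ∈ I.dom) ∧
    q.ansVars.map π = t ∧ ∀ a ∈ q.atoms, a.satBy I π

/-- `K ⊨ q(t)` for a tuple `t` of individuals. -/
def KB.entailsCQ (K : KB) (q : CQuery) (t : List ℕ) : Prop :=
  ∀ I : Interp, isModel I K → I.satCQ q (t.map Elem.ind)

/-- An ontology-mediated query. -/
structure OMQ where
  tbox : TBox
  sig : Set ClosedPred
  q : CQuery

def OMQ.kb (Q : OMQ) (Ab : ABox) : KB := ⟨Q.tbox, Q.sig, Ab⟩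

/-- `t ∈ cert(Q, A)`: `t` is a tuple (of the query's arity) of individuals
occurring in the KB that is entailed. -/
def certOMQ (Q : OMQ) (Ab : ABox) (t : List ℕ) : Prop :=
  t.length = Q.q.ansVars.length ∧ (∀ a ∈ t, a ∈ (Q.kb Ab).inds) ∧
  (Q.kb Ab).entailsCQ Q.q t

/-- c-variables of an OMQ. -/
def isCVar (Q : OMQ) (x : ℕ) : Prop :=
  x ∈ Q.q.ansVars ∨
  (∃ p y, (QAtom.ra p x y ∈ Q.q.atoms ∨ QAtom.ra p y x ∈ Q.q.atoms) ∧
      roleClosed Q.tbox Q.sig (.name p)) ∨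
  (∃ A, QAtom.ca A x ∈ Q.q.atoms ∧ ClosedPred.cp A ∈ Q.sig)

/-- A c-safe OMQ: all variables of the query are c-variables. -/
def cSafe (Q : OMQ) : Prop := ∀ x ∈ Q.q.varSet, isCVar Q x

/-! ## Query graph, acyclicity -/

/-- The query (Gaifman) graph of a set of atoms. -/
def queryGraphS (s : Set QAtom) : SimpleGraph ℕ where
  Adj x y := x ≠ y ∧ ∃ a ∈ s, x ∈ a.vars ∧ y ∈ a.vars
  symm := ⟨fun x y h => ⟨h.1.symm, h.2.imp fun a h' => ⟨h'.1, h'.2.2, h'.2.1⟩⟩⟩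
  loopless := ⟨fun x h => h.1 rfl⟩

def CQConnectedS (s : Set QAtom) : Prop :=
  ∀ x ∈ qvarsS s, ∀ y ∈ qvarsS s, (queryGraphS s).Reachable x y

/-- Acyclic CQ: the query graph is acyclic, and every edge carries exactly
one role atom. -/
def CQAcyclicS (s : Set QAtom) : Prop :=
  (queryGraphS s).IsAcyclic ∧
  ∀ x y, (queryGraphS s).Adj x y →
    ∃! a : QAtom, a ∈ s ∧ ∃ p, a = QAtom.ra p x y ∨ a = QAtom.ra p y x

/-- `q⁻`: the atoms of `Q` minus the role atoms connecting two c-variables. -/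
def qminus (Q : OMQ) : Set QAtom :=
  {a | a ∈ Q.q.atoms ∧ ¬ ∃ p x y, a = QAtom.ra p x y ∧ isCVar Q x ∧ isCVar Q y}

/-- c-acyclicity: `q⁻` is acyclic and every connected component of `G(q⁻)`
contains exactly one c-variable. -/
def cAcyclic (Q : OMQ) : Prop :=
  CQAcyclicS (qminus Q) ∧
  ∀ x ∈ qvarsS (qminus Q),
    ∃! y, y ∈ qvarsS (qminus Q) ∧ (queryGraphS (qminus Q)).Reachable x y ∧ isCVar Q y

/-- Instance query: a single atom, all of whose variables are answer variables. -/
def isInstanceQuery (q : CQuery) : Prop :=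
  (∃ a : QAtom, q.atoms = [a]) ∧ ∀ v ∈ q.varSet, v ∈ q.ansVars

/-! ## Rooted tree presentations of acyclic CQs and query concepts -/

/-- Rooted trees presenting connected acyclic CQs: a node carries its
variable, the concept names labelling it, and its children together with the
(possibly inverse) role connecting to them. -/
inductive QTree : Type
  | node : ℕ → List ℕ → List (DLRole × QTree) → QTree

def QTree.root : QTree → ℕ
  | .node x _ _ => x

def conjOfList : List DLConcept → DLConcept
  | [] => .top
  | C :: rest => .conj C (conjOfList rest)

mutual
  /-- The query concept `C_{q,x}` determined by a rooted tree presentation. -/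
  def QTree.concept : QTree → DLConcept
    | .node _ cs children =>
        .conj (conjOfList (cs.map DLConcept.atom)) (QTree.childConcept children)
  def QTree.childConcept : List (DLRole × QTree) → DLConcept
    | [] => .top
    | (r, t) :: rest => .conj (.ex r (QTree.concept t)) (QTree.childConcept rest)
end

/-- The role atom represented by a tree edge from `x` to `y` labelled `r`. -/
def edgeAtom (x : ℕ) (r : DLRole) (y : ℕ) : QAtom :=
  match r with
  | .name p => .ra p x y
  | .inv p => .ra p y x

mutual
  /-- The set of atoms represented by a tree. -/
  def QTree.atomSet : QTree → Set QAtom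
    | .node x cs children =>
        {a | ∃ A ∈ cs, a = QAtom.ca A x} ∪ QTree.childAtomSet x children
  def QTree.childAtomSet : ℕ → List (DLRole × QTree) → Set QAtom
    | _, [] => ∅
    | x, (r, t) :: rest =>
        insert (edgeAtom x r t.root) (QTree.atomSet t) ∪ QTree.childAtomSet x rest
end

mutual
  def QTree.varList : QTree → List ℕ
    | .node x _ children => x :: QTree.childVarList children
  def QTree.childVarList : List (DLRole × QTree) → List ℕ
    | [] => []
    | (_, t) :: rest => QTree.varList t ++ QTree.childVarList rest
end

/-- `t` is the rooted tree presentation of the CQ `q` (viewed as a set of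
atoms) with root variable `x`. -/
def QTree.presents (t : QTree) (q : Set QAtom) (x : ℕ) : Prop :=
  t.root = x ∧ t.atomSet = q ∧ t.varList.Nodup
/-! ## Concept and role names occurring in an OMQ -/

def QAtom.cnames : QAtom → Set ℕ
  | .ca A _ => {A}
  | .ra _ _ _ => ∅

def QAtom.rnames : QAtom → Set ℕ
  | .ca _ _ => ∅
  | .ra p _ _ => {p}

def OMQ.cnames (Q : OMQ) : Set ℕ := TBox.cnames Q.tbox ∪ ⋃ a ∈ Q.q.atoms, QAtom.cnames a
def OMQ.rnames (Q : OMQ) : Set ℕ := TBox.rnames Q.tbox ∪ ⋃ a ∈ Q.q.atoms, QAtom.rnames a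
/-! # Cores and extensions -/

/-- The possible domain of a core for `K`: the individuals of `K` plus the
fringe individuals `c^α` for existential inclusions `α` of the TBox. -/
def coreDom (K : KB) : Set Elem :=
  {e | ∃ a ∈ K.inds, e = Elem.ind a} ∪
  {e | ∃ a ∈ K.inds, ∃ α ∈ K.tbox, Inclusion.isExistential α ∧ e = Elem.fringe a α}

/-- A core for a KB with closed predicates (conditions (c1)--(c5)). -/
structure IsCore (Ic : Interp) (K : KB) : Prop where
  dom_sub : Ic.dom ⊆ coreDom K
  inds_sub : ∀ a ∈ K.inds, Elem.ind a ∈ Ic.dom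
  sna : ∀ a ∈ K.inds, Ic.intI a = Elem.ind a
  c2 : Ic.satABoxClosed K.sig K.abox
  c3 : ∀ α ∈ K.tbox,
        (¬ α.isExistential → Ic.satIncl α) ∧
        (∀ A r A', α = exIncl A r A' → roleClosed K.tbox K.sig r → Ic.satIncl α)
  c4 : ∀ p : ℕ, ∀ x ∈ Ic.intR p,
        (∃ a b, a ∈ K.inds ∧ b ∈ K.inds ∧ x = (Elem.ind a, Elem.ind b)) ∨
        (∃ a α, a ∈ K.inds ∧ x = (Elem.ind a, Elem.fringe a α)) ∨
        (∃ a α, a ∈ K.inds ∧ x = (Elem.fringe a α, Elem.ind a))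
  c5 : ∀ e ∈ Ic.dom, ¬ e.isFringe →
        ∀ A r A', exIncl A r A' ∈ K.tbox → e ∈ Ic.intC A →
          e ∈ Ic.cExt (.ex r (.atom A'))

/-- `J` is an extension of the core `Ic` (with respect to the closed
predicates `sig`). -/
structure IsExtension (J Ic : Interp) (sig : Set ClosedPred) : Prop where
  dom_sub : Ic.dom ⊆ J.dom
  cAgree : ∀ A : ℕ, Ic.intC A = J.intC A ∩ Ic.dom
  rAgree : ∀ p : ℕ, Ic.intR p = J.intR p ∩ (Ic.dom ×ˢ Ic.dom)
  closedC : ∀ A : ℕ, ClosedPred.cp A ∈ sig → J.intC A = Ic.intC A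
  closedR : ∀ p : ℕ, ClosedPred.rp p ∈ sig → J.intR p = Ic.intR p

/-! # Types and the model building game -/

/-- The basic concepts occurring in a concept. -/
def DLConcept.basics : DLConcept → Set DLConcept
  | .atom A => {.atom A}
  | .nom a => {.nom a}
  | .top => {.top}
  | .bot => {.bot}
  | .neg C => C.basics
  | .conj C D => C.basics ∪ D.basics
  | .disj C D => C.basics ∪ D.basics
  | .ex _ C => C.basics
  | .all _ C => C.basics

def Inclusion.basics : Inclusion → Set DLConcept
  | .concl C D => C.basics ∪ D.basics
  | .rolel _ _ => ∅

/-- `N_C⁺(T)`: the basic concepts occurring in `T`, together with `⊤`, `⊥`. -/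
def TBox.basicConcepts (T : TBox) : Set DLConcept :=
  {DLConcept.top, DLConcept.bot} ∪ ⋃ α ∈ T, Inclusion.basics α

/-- A type over `T`. -/
def IsType (T : TBox) (τ : Set DLConcept) : Prop :=
  τ ⊆ TBox.basicConcepts T ∧ DLConcept.top ∈ τ ∧ DLConcept.bot ∉ τ

/-- `type(e, I)`. -/
def typeOf (T : TBox) (I : Interp) (e : Elem) : Set DLConcept :=
  {B | B ∈ TBox.basicConcepts T ∧ e ∈ I.cExt B}

/-- `τ` is realized in `I`. -/
def realizedIn (T : TBox) (I : Interp) (τ : Set DLConcept) : Prop :=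
  ∃ e ∈ I.dom, typeOf T I e = τ

def conjuncts : DLConcept → Set DLConcept
  | .conj C D => conjuncts C ∪ conjuncts D
  | C => {C}

def disjuncts : DLConcept → Set DLConcept
  | .disj C D => disjuncts C ∪ disjuncts D
  | C => {C}

/-- `τ` satisfies an (N1) inclusion. -/
def typeSatN1 (τ : Set DLConcept) : Inclusion → Prop
  | .concl C D => conjuncts C ⊆ τ → ∃ B ∈ disjuncts D, B ∈ τ
  | .rolel _ _ => True

/-- c-types. -/
def IsCType (T : TBox) (sig : Set ClosedPred) (τ : Set DLConcept) : Prop :=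
  (∃ a, DLConcept.nom a ∈ τ) ∨
  (∃ A, DLConcept.atom A ∈ τ ∧ ClosedPred.cp A ∈ sig) ∨
  (∃ A r A', exIncl A r A' ∈ T ∧ roleClosed T sig r ∧ DLConcept.atom A ∈ τ)

/-- The locally consistent types `LC(T, Σ, I_c)`. -/
def LC (T : TBox) (sig : Set ClosedPred) (Ic : Interp) : Set (Set DLConcept) :=
  {τ | IsType T τ ∧ (∀ α ∈ T, IsN1 α → typeSatN1 τ α) ∧
       (IsCType T sig τ → realizedIn T Ic τ)}

/-- Conditions (C1) and (C2): `τ'` is a legal response to the challenge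
`A ⊑ ∃r.A'` against the current type `τ`. -/
def LegalResponse (T : TBox) (A : ℕ) (r : DLRole) (A' : ℕ) (τ τ' : Set DLConcept) : Prop :=
  DLConcept.atom A' ∈ τ' ∧
  ∀ A₁ s A₂, Inclusion.concl (.atom A₁) (.all s (.atom A₂)) ∈ T →
    (subRole T r s → DLConcept.atom A₁ ∈ τ → DLConcept.atom A₂ ∈ τ') ∧
    (subRole T r.invert s → DLConcept.atom A₁ ∈ τ' → DLConcept.atom A₂ ∈ τ)

/-- A strategy for Bob, as a partial function. -/
abbrev Strategy := Set DLConcept → Inclusion → Option (Set DLConcept)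

/-- Well-formedness of a strategy: it is defined only on pairs of a non-c-type
`τ` and an existential inclusion of `T` triggered by `τ`, and returns a type
satisfying (C1) and (C2). -/
def IsStrategy (T : TBox) (sig : Set ClosedPred) (str : Strategy) : Prop :=
  ∀ τ α τ', str τ α = some τ' →
    IsType T τ ∧ ¬ IsCType T sig τ ∧ IsType T τ' ∧
    ∃ A r A', α = exIncl A r A' ∧ α ∈ T ∧ DLConcept.atom A ∈ τ ∧
      LegalResponse T A r A' τ τ'

/-- A finite run `a α₁ τ₁ α₂ τ₂ ⋯`. -/
structure GRun where
  start : Elem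
  steps : List (Inclusion × Set DLConcept)

/-- `tail(w)`. -/
def GRun.tail (T : TBox) (Ic : Interp) (w : GRun) : Set DLConcept :=
  match w.steps.getLast? with
  | some s => s.2
  | none => typeOf T Ic w.start

/-- `w` is a (finite) run of the game on the core `Ic`: it starts at a fringe
individual of `Ic`, its inclusions are existential inclusions of `T`, its
types are types over `T`, and only its last type may be a c-type. -/
def IsRunOn (T : TBox) (sig : Set ClosedPred) (Ic : Interp) (w : GRun) : Prop :=
  (∃ c α, w.start = Elem.fringe c α) ∧ w.start ∈ Ic.dom ∧
  (∀ s ∈ w.steps, s.1 ∈ T ∧ s.1.isExistential ∧ IsType T s.2) ∧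
  (∀ (i : ℕ) s, w.steps[i]? = some s → i + 1 < w.steps.length → ¬ IsCType T sig s.2)

def FollowsFrom (str : Strategy) : Set DLConcept → List (Inclusion × Set DLConcept) → Prop
  | _, [] => True
  | τ, (α, τ') :: rest => str τ α = some τ' ∧ FollowsFrom str τ' rest

/-- `w` follows the strategy `str` on `Ic`. -/
def RunFollows (T : TBox) (Ic : Interp) (str : Strategy) (w : GRun) : Prop :=
  FollowsFrom str (typeOf T Ic w.start) w.steps

/-- A non-losing strategy for Bob on `Ic`. -/
def NonLosing (T : TBox) (sig : Set ClosedPred) (Ic : Interp) (str : Strategy) : Prop :=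
  IsStrategy T sig str ∧
  ∀ w : GRun, IsRunOn T sig Ic w → RunFollows T Ic str w →
    w.tail T Ic ∈ LC T sig Ic ∧
    (¬ IsCType T sig (w.tail T Ic) →
      ∀ A r A', exIncl A r A' ∈ T → DLConcept.atom A ∈ w.tail T Ic →
        ∃ τ', str (w.tail T Ic) (exIncl A r A') = some τ')

/-! # The marking algorithm -/

/-- The types marked by the type elimination algorithm `Mark(T, Σ, I_c)`:
the least set containing all types violating some (N1) inclusion, all
c-types not realized in `I_c`, and closed under the rule (M_∃): a type gets
marked if some existential inclusion triggered by it has all its legal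
responses already marked. -/
inductive Marked (T : TBox) (sig : Set ClosedPred) (Ic : Interp) : Set DLConcept → Prop
  | n1 {τ : Set DLConcept} : IsType T τ →
      (∃ α ∈ T, IsN1 α ∧ ¬ typeSatN1 τ α) → Marked T sig Ic τ
  | closed {τ : Set DLConcept} : IsType T τ → IsCType T sig τ →
      ¬ realizedIn T Ic τ → Marked T sig Ic τ
  | exStep {τ : Set DLConcept} {A : ℕ} {r : DLRole} {A' : ℕ} :
      IsType T τ → exIncl A r A' ∈ T → DLConcept.atom A ∈ τ →
      (∀ τ', IsType T τ' → LegalResponse T A r A' τ τ' → Marked T sig Ic τ') →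
      Marked T sig Ic τ
/-! # Datalog with disjunction and negation, stable model semantics -/

/-- Predicate symbols: the concept names (unary), the role names (binary),
the built-in inequality predicate, and auxiliary predicates. -/
inductive DPred : Type
  | concept : ℕ → DPred
  | role : ℕ → DPred
  | neq : DPred
  | aux : ℕ → DPred
  deriving DecidableEq

inductive DTerm : Type
  | var : ℕ → DTerm
  | const : ℕ → DTerm
  deriving DecidableEq

structure DAtom where
  pred : DPred
  args : List DTerm
  deriving DecidableEq

/-- Ground atoms (over the constants). -/
structure GAtom where
  pred : DPred
  args : List ℕ
  deriving DecidableEq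

/-- A rule `h₁ ∨ ⋯ ∨ hₙ ← b₁, …, bₖ, not c₁, …, not cₘ`. -/
structure DRule where
  head : List DAtom
  posBody : List DAtom
  negBody : List DAtom
  deriving DecidableEq

abbrev DProgram := List DRule

def DTerm.constOf : DTerm → Set ℕ
  | .var _ => ∅
  | .const c => {c}

def DTerm.varOf : DTerm → Set ℕ
  | .var v => {v}
  | .const _ => ∅

def DAtom.consts (a : DAtom) : Set ℕ := ⋃ t ∈ a.args, DTerm.constOf t
def DAtom.vars (a : DAtom) : Set ℕ := ⋃ t ∈ a.args, DTerm.varOf t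
def DRule.atoms (ρ : DRule) : List DAtom := ρ.head ++ ρ.posBody ++ ρ.negBody
def DRule.consts (ρ : DRule) : Set ℕ := ⋃ a ∈ ρ.atoms, DAtom.consts a
def DRule.vars (ρ : DRule) : Set ℕ := ⋃ a ∈ ρ.atoms, DAtom.vars a
def progConsts (P : DProgram) : Set ℕ := ⋃ ρ ∈ P, DRule.consts ρ

/-- Safety: every variable of the rule occurs in a positive body atom. -/
def DRule.safe (ρ : DRule) : Prop := ∀ v ∈ ρ.vars, ∃ a ∈ ρ.posBody, v ∈ a.vars

def safeProgram (P : DProgram) : Prop := ∀ ρ ∈ P, ρ.safe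
def nonDisjunctive (P : DProgram) : Prop := ∀ ρ ∈ P, ρ.head.length ≤ 1
def positiveProgram (P : DProgram) : Prop := ∀ ρ ∈ P, ρ.negBody = []
/-- No occurrence of the built-in inequality predicate. -/
def neqFree (P : DProgram) : Prop := ∀ ρ ∈ P, ∀ a ∈ ρ.atoms, a.pred ≠ DPred.neq

/-- Ground rules. -/
structure GRRule where
  head : List GAtom
  posBody : List GAtom
  negBody : List GAtom

def DTerm.subst (σ : ℕ → ℕ) : DTerm → ℕ
  | .var v => σ v
  | .const c => c

def DAtom.inst (σ : ℕ → ℕ) (a : DAtom) : GAtom := ⟨a.pred, a.args.map (DTerm.subst σ)⟩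

def DRule.inst (σ : ℕ → ℕ) (ρ : DRule) : GRRule :=
  ⟨ρ.head.map (DAtom.inst σ), ρ.posBody.map (DAtom.inst σ), ρ.negBody.map (DAtom.inst σ)⟩

/-- The grounding of a program: all instances of its rules over the
constants occurring in the program. -/
def grounding (P : DProgram) : Set GRRule :=
  {g | ∃ ρ ∈ P, ∃ σ : ℕ → ℕ, (∀ v ∈ DRule.vars ρ, σ v ∈ progConsts P) ∧ g = DRule.inst σ ρ}

/-- A constant occurring in a non-inequality atom of `I`. -/
def activeConst (I : Finset GAtom) (c : ℕ) : Prop :=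
  ∃ g ∈ I, g.pred ≠ DPred.neq ∧ c ∈ g.args

/-- The built-in semantics of the inequality predicate: `a ≠ b` holds in `I`
iff `a` and `b` are distinct constants both occurring in non-inequality atoms
of `I`. -/
def respectsNeq (I : Finset GAtom) : Prop :=
  ∀ args : List ℕ, (⟨DPred.neq, args⟩ : GAtom) ∈ I ↔
    ∃ a b : ℕ, args = [a, b] ∧ a ≠ b ∧ activeConst I a ∧ activeConst I b

/-- `I` is a (Herbrand) model of a set of positive ground rules. -/
def isHModel (I : Finset GAtom) (G : Set GRRule) : Prop :=
  respectsNeq I ∧ ∀ g ∈ G, (∀ b ∈ g.posBody, b ∈ I) → ∃ h ∈ g.head, h ∈ I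

/-- The GL-reduct of a set of ground rules with respect to `I`. -/
def glReduct (G : Set GRRule) (I : Finset GAtom) : Set GRRule :=
  {g' | ∃ g ∈ G, (∀ n ∈ g.negBody, n ∉ I) ∧ g' = ⟨g.head, g.posBody, []⟩}

/-- `I` is a stable model of `P`: a minimal model of the GL-reduct of the
grounding of `P` with respect to `I`. -/
def isStable (P : DProgram) (I : Finset GAtom) : Prop :=
  isHModel I (glReduct (grounding P) I) ∧
  ∀ J : Finset GAtom, isHModel J (glReduct (grounding P) I) → J ⊆ I → J = I

/-- ABox assertions as facts. -/
def assertFact : Assertion → DRule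
  | .ca A a => ⟨[⟨DPred.concept A, [DTerm.const a]⟩], [], []⟩
  | .ra p a b => ⟨[⟨DPred.role p, [DTerm.const a, DTerm.const b]⟩], [], []⟩

def aboxFacts (Ab : ABox) : DProgram := Ab.map assertFact

/-- Ground atoms as facts. -/
def gfact (g : GAtom) : DRule := ⟨[⟨g.pred, g.args.map DTerm.const⟩], [], []⟩

def factProg (F : List GAtom) : DProgram := F.map gfact

def GAtom.rename (ρ : ℕ → ℕ) (g : GAtom) : GAtom := ⟨g.pred, g.args.map ρ⟩

def gconsts (F : List GAtom) : Set ℕ := ⋃ g ∈ F, {c | c ∈ g.args}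

/-- `t` is a certain answer to the query `(P, q̂)` over the database `D`:
`q̂(t)` belongs to every stable model of `P ∪ D`. -/
def certD (P : DProgram) (qp : DPred) (D : DProgram) (t : List ℕ) : Prop :=
  ∀ I : Finset GAtom, isStable (P ++ D) I → (⟨qp, t⟩ : GAtom) ∈ I


/-! The types Bob can actually face — tails of runs following `str`, together with the types of
non-fringe elements of the core — form a set that no rule of `Mark` can ever eliminate. They satisfy
every (N1) inclusion (by local consistency, resp. because the core satisfies them), c-types among them
are realized in the core, and every existential challenge has a legal response inside the set: for a
non-c-type tail, `str` extends the run; for a non-fringe core element, condition (c5) yields a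
successor in the core, whose type is again in the set (a fringe successor starts a run of length
zero); and a c-type tail is realized in the core at a non-fringe element, since fringe elements never
have c-types. Induction on the marking then shows that no marked type lies in this set. -/

section Semantics

lemma Interp.mem_roleExt_invert (I : Interp) (r : DLRole) (x y : Elem) :
    (x, y) ∈ I.roleExt r.invert ↔ (y, x) ∈ I.roleExt r := by
  cases r <;> simp [DLRole.invert, Interp.roleExt]

lemma Interp.mem_dom_of_mem_roleExt (I : Interp) {r : DLRole} {x : Elem × Elem}
    (h : x ∈ I.roleExt r) : x.1 ∈ I.dom ∧ x.2 ∈ I.dom := by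
  cases r with
  | name p => exact I.intR_sub p x h
  | inv p => exact (I.intR_sub p _ h).symm

lemma isType_typeOf (T : TBox) {I : Interp} {e : Elem} (he : e ∈ I.dom) :
    IsType T (typeOf T I e) :=
  ⟨fun _ hB => hB.1, ⟨Or.inl (Or.inl rfl), he⟩, fun h => h.2⟩

lemma basics_subset_basicConcepts {T : TBox} {α : Inclusion} (hα : α ∈ T) :
    α.basics ⊆ T.basicConcepts :=
  fun _ hB => Or.inr (Set.mem_biUnion hα hB)

lemma DLConcept.mem_noms_of_nom_mem_basics {b : ℕ} :
    ∀ C : DLConcept, DLConcept.nom b ∈ C.basics → b ∈ C.noms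
  | .atom _, h | .top, h | .bot, h => by simp [DLConcept.basics] at h
  | .nom _, h => by simpa [DLConcept.basics, DLConcept.noms] using h
  | .neg C, h | .ex _ C, h | .all _ C, h => C.mem_noms_of_nom_mem_basics h
  | .conj C D, h | .disj C D, h =>
      h.imp C.mem_noms_of_nom_mem_basics D.mem_noms_of_nom_mem_basics

lemma KB.mem_inds_of_nom_mem_basicConcepts {K : KB} {b : ℕ}
    (h : DLConcept.nom b ∈ K.tbox.basicConcepts) : b ∈ K.inds := by
  obtain (h | h) | h := h
  · simp at h
  · simp at h
  obtain ⟨α, hα, hb⟩ := Set.mem_iUnion₂.mp h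
  refine Or.inl (Set.mem_biUnion hα ?_)
  cases α with
  | concl C D => exact hb.imp C.mem_noms_of_nom_mem_basics D.mem_noms_of_nom_mem_basics
  | rolel r s => simp [Inclusion.basics] at hb

end Semantics

section NormalForm

lemma IsN1.not_isExistential {α : Inclusion} (h : IsN1 α) : ¬ α.isExistential := by
  rintro ⟨A, r, A', rfl⟩
  obtain ⟨-, hD⟩ := h
  cases hD with
  | basic hb => cases hb

lemma IsConjOfBasic.mem_cExt {I : Interp} {C : DLConcept} (h : IsConjOfBasic C) {e : Elem}
    (hC : ∀ B ∈ conjuncts C, e ∈ I.cExt B) : e ∈ I.cExt C := by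
  induction h with
  | basic hb => cases hb <;> exact hC _ rfl
  | conj _ _ ihC ihD => exact ⟨ihC fun B hB => hC B (Or.inl hB), ihD fun B hB => hC B (Or.inr hB)⟩

lemma IsDisjOfBasic.exists_disjunct {I : Interp} {D : DLConcept} (h : IsDisjOfBasic D)
    {e : Elem} (he : e ∈ I.cExt D) : ∃ B ∈ disjuncts D, B ∈ D.basics ∧ e ∈ I.cExt B := by
  induction h with
  | basic hb => cases hb <;> exact ⟨_, rfl, rfl, he⟩
  | disj _ _ ihC ihD =>
      rcases he with he | he
      · obtain ⟨B, hBd, hBb, hBe⟩ := ihC he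
        exact ⟨B, Or.inl hBd, Or.inl hBb, hBe⟩
      · obtain ⟨B, hBd, hBb, hBe⟩ := ihD he
        exact ⟨B, Or.inr hBd, Or.inr hBb, hBe⟩

lemma typeSatN1_typeOf {T : TBox} {I : Interp} {α : Inclusion} (hα : α ∈ T) (hn1 : IsN1 α)
    (hsat : I.satIncl α) (e : Elem) : typeSatN1 (typeOf T I e) α := by
  cases α with
  | rolel r s => trivial
  | concl C D =>
      intro hsub
      obtain ⟨B, hBd, hBb, hBe⟩ :=
        hn1.2.exists_disjunct (hsat (hn1.1.mem_cExt fun B hB => (hsub hB).2))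
      exact ⟨B, hBd, basics_subset_basicConcepts hα (Or.inr hBb), hBe⟩

end NormalForm

namespace IsCore

variable {K : KB} {Ic : Interp}

lemma roleExt_subset (hc : IsCore Ic K) {r s : DLRole} (h : subRole K.tbox r s) :
    Ic.roleExt r ⊆ Ic.roleExt s := by
  induction h with
  | refl r => exact le_rfl
  | inv _ ih =>
      rintro ⟨x, y⟩ hxy
      exact (Ic.mem_roleExt_invert _ x y).mpr (ih ((Ic.mem_roleExt_invert _ x y).mp hxy))
  | step _ hmem ih =>
      refine (ih.trans ((hc.c3 _ hmem).1 ?_))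
      rintro ⟨A, r', A', heq⟩
      simp [exIncl] at heq

lemma legalResponse_typeOf (hc : IsCore Ic K) {A : ℕ} {r : DLRole} {A' : ℕ}
    (hin : exIncl A r A' ∈ K.tbox) {e f : Elem}
    (hef : (e, f) ∈ Ic.roleExt r) (hf : f ∈ Ic.intC A') :
    LegalResponse K.tbox A r A' (typeOf K.tbox Ic e) (typeOf K.tbox Ic f) := by
  refine ⟨⟨basics_subset_basicConcepts hin (by simp [exIncl, Inclusion.basics,
    DLConcept.basics]), hf⟩, fun A₁ s A₂ hall => ?_⟩
  have hsat : Ic.satIncl (.concl (.atom A₁) (.all s (.atom A₂))) :=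
    (hc.c3 _ hall).1 (by rintro ⟨_, _, _, heq⟩; simp [exIncl] at heq)
  have hA₂ : DLConcept.atom A₂ ∈ K.tbox.basicConcepts :=
    basics_subset_basicConcepts hall (by simp [Inclusion.basics, DLConcept.basics])
  refine ⟨fun hrs hA₁ => ⟨hA₂, (hsat hA₁.2).2 f (hc.roleExt_subset hrs hef)⟩,
    fun hrs hA₁ => ⟨hA₂, (hsat hA₁.2).2 e (hc.roleExt_subset hrs ?_)⟩⟩
  exact (Ic.mem_roleExt_invert r f e).mpr hef

lemma not_isCType_typeOf_fringe (hc : IsCore Ic K) (a : ℕ) (α : Inclusion) :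
    ¬ IsCType K.tbox K.sig (typeOf K.tbox Ic (Elem.fringe a α)) := by
  rintro (⟨b, hb, he⟩ | ⟨A, ⟨-, he⟩, hA⟩ | ⟨A, r, A', hin, ⟨s, hrs, hs⟩, -, he⟩)
  · have : Elem.fringe a α = Elem.ind b :=
      he.trans (hc.sna b (KB.mem_inds_of_nom_mem_basicConcepts hb))
    simp at this
  · obtain ⟨_, h, -⟩ := hc.c2.2.1 A hA _ he
    simp at h
  · obtain ⟨f, hf, -⟩ := (hc.c3 _ hin).2 A r A' rfl ⟨s, hrs, hs⟩ he
    have hs' := hc.roleExt_subset hrs hf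
    cases s with
    | name p =>
        obtain ⟨_, _, h, -⟩ := hc.c2.2.2 p hs _ hs'
        simp at h
    | inv p =>
        obtain ⟨_, _, h, -⟩ := hc.c2.2.2 p hs _ hs'
        simp at h

end IsCore

section Runs

variable {T : TBox} {sig : Set ClosedPred} {Ic : Interp}

lemma GRun.tail_eq_getD (w : GRun) :
    w.tail T Ic = (w.steps.getLast?.map Prod.snd).getD (typeOf T Ic w.start) := by
  unfold GRun.tail
  cases w.steps.getLast? <;> rfl

lemma GRun.tail_snoc (w : GRun) (s : Inclusion × Set DLConcept) :
    (⟨w.start, w.steps ++ [s]⟩ : GRun).tail T Ic = s.2 := by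
  simp [GRun.tail_eq_getD]

lemma followsFrom_append_singleton {str : Strategy} {α : Inclusion} {τ' : Set DLConcept} :
    ∀ (τ₀ : Set DLConcept) (l : List (Inclusion × Set DLConcept)), FollowsFrom str τ₀ l →
      str ((l.getLast?.map Prod.snd).getD τ₀) α = some τ' →
      FollowsFrom str τ₀ (l ++ [(α, τ')])
  | _, [], _, h => ⟨h, trivial⟩
  | _, (β, σ) :: rest, ⟨hβ, hrest⟩, h => by
      refine ⟨hβ, followsFrom_append_singleton σ rest hrest ?_⟩
      cases hl : rest.getLast? <;> simp_all [List.getLast?_cons]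

lemma RunFollows.snoc {str : Strategy} {w : GRun} (hw : RunFollows T Ic str w)
    {α : Inclusion} {τ' : Set DLConcept} (h : str (w.tail T Ic) α = some τ') :
    RunFollows T Ic str ⟨w.start, w.steps ++ [(α, τ')]⟩ :=
  followsFrom_append_singleton _ _ hw (by rwa [← GRun.tail_eq_getD])

lemma IsRunOn.snoc {w : GRun} (hw : IsRunOn T sig Ic w) {α : Inclusion} {τ' : Set DLConcept}
    (hα : α ∈ T) (hex : α.isExistential) (hτ' : IsType T τ')
    (hw_tail : ¬ IsCType T sig (w.tail T Ic)) :
    IsRunOn T sig Ic ⟨w.start, w.steps ++ [(α, τ')]⟩ := by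
  obtain ⟨hstart, hdom, hsteps, hinner⟩ := hw
  refine ⟨hstart, hdom, ?_, fun i s hs hi => ?_⟩
  · intro s hs
    rcases List.mem_append.mp hs with hs | hs
    · exact hsteps s hs
    · rw [List.mem_singleton.mp hs]
      exact ⟨hα, hex, hτ'⟩
  simp only [List.length_append, List.length_singleton, Nat.add_lt_add_iff_right] at hi
  rw [List.getElem?_append_left hi] at hs
  rcases Nat.lt_or_ge (i + 1) w.steps.length with hi' | hi'
  · exact hinner i s hs hi'
  · have hlast : w.steps.getLast? = some s := by
      rwa [List.getLast?_eq_getElem?, show w.steps.length - 1 = i by omega]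
    simpa [GRun.tail, hlast] using hw_tail

lemma isRunOn_fringe {c : ℕ} {β : Inclusion} (h : Elem.fringe c β ∈ Ic.dom) :
    IsRunOn T sig Ic ⟨Elem.fringe c β, []⟩ :=
  ⟨⟨c, β, rfl⟩, h, by simp, by simp⟩

end Runs

section Marking

variable {T : TBox} {sig : Set ClosedPred} {Ic : Interp}

structure SelfSupporting (T : TBox) (sig : Set ClosedPred) (Ic : Interp)
    (S : Set (Set DLConcept)) : Prop where
  satN1 : ∀ τ ∈ S, ∀ α ∈ T, IsN1 α → typeSatN1 τ α
  realized : ∀ τ ∈ S, IsCType T sig τ → realizedIn T Ic τ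
  witness : ∀ τ ∈ S, ∀ A r A', exIncl A r A' ∈ T → DLConcept.atom A ∈ τ →
    ∃ τ' ∈ S, IsType T τ' ∧ LegalResponse T A r A' τ τ'

lemma SelfSupporting.not_marked {S : Set (Set DLConcept)} (hS : SelfSupporting T sig Ic S)
    {τ : Set DLConcept} (hm : Marked T sig Ic τ) : τ ∉ S := by
  induction hm with
  | n1 _ hviol =>
      obtain ⟨α, hα, hn1, hv⟩ := hviol
      exact fun hτ => hv (hS.satN1 _ hτ α hα hn1)
  | closed _ hct hnr => exact fun hτ => hnr (hS.realized _ hτ hct)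
  | exStep _ hin hA _ ih =>
      intro hτ
      obtain ⟨τ', hτ'S, hτ', hleg⟩ := hS.witness _ hτ _ _ _ hin hA
      exact ih τ' hτ' hleg hτ'S

def runTails (T : TBox) (sig : Set ClosedPred) (Ic : Interp) (str : Strategy) :
    Set (Set DLConcept) :=
  {τ | ∃ w, IsRunOn T sig Ic w ∧ RunFollows T Ic str w ∧ w.tail T Ic = τ}

def nonFringeTypes (T : TBox) (Ic : Interp) : Set (Set DLConcept) :=
  {τ | ∃ e ∈ Ic.dom, ¬ e.isFringe ∧ typeOf T Ic e = τ}

lemma runTails_subset_LC {str : Strategy} (hnl : NonLosing T sig Ic str) :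
    runTails T sig Ic str ⊆ LC T sig Ic := by
  rintro _ ⟨w, hrun, hfol, rfl⟩
  exact (hnl.2 w hrun hfol).1

lemma typeOf_mem_runTails_union {str : Strategy} {e : Elem} (he : e ∈ Ic.dom) :
    typeOf T Ic e ∈ runTails T sig Ic str ∪ nonFringeTypes T Ic := by
  cases e with
  | fringe c β => exact Or.inl ⟨_, isRunOn_fringe he, trivial, rfl⟩
  | ind _ | anon _ => exact Or.inr ⟨_, he, not_false, rfl⟩

variable {K : KB} {str : Strategy}

lemma IsCore.mem_nonFringeTypes_of_isCType (hc : IsCore Ic K) {τ : Set DLConcept}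
    (hτ : realizedIn K.tbox Ic τ) (hct : IsCType K.tbox K.sig τ) :
    τ ∈ nonFringeTypes K.tbox Ic := by
  obtain ⟨e, he, rfl⟩ := hτ
  cases e with
  | fringe c β => exact absurd hct (hc.not_isCType_typeOf_fringe c β)
  | ind _ | anon _ => exact ⟨_, he, not_false, rfl⟩

lemma IsCore.exists_legalResponse_of_mem_nonFringeTypes (hc : IsCore Ic K)
    {τ : Set DLConcept} (hτ : τ ∈ nonFringeTypes K.tbox Ic) {A : ℕ} {r : DLRole} {A' : ℕ}
    (hin : exIncl A r A' ∈ K.tbox) (hA : DLConcept.atom A ∈ τ) :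
    ∃ τ' ∈ runTails K.tbox K.sig Ic str ∪ nonFringeTypes K.tbox Ic,
      IsType K.tbox τ' ∧ LegalResponse K.tbox A r A' τ τ' := by
  obtain ⟨e, he, hnf, rfl⟩ := hτ
  obtain ⟨f, hef, hf⟩ := hc.c5 e he hnf A r A' hin hA.2
  have hfdom := (Ic.mem_dom_of_mem_roleExt hef).2
  exact ⟨_, typeOf_mem_runTails_union hfdom, isType_typeOf _ hfdom,
    hc.legalResponse_typeOf hin hef hf⟩

lemma exists_legalResponse_of_mem_runTails (hnl : NonLosing K.tbox K.sig Ic str)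
    {τ : Set DLConcept} (hτ : τ ∈ runTails K.tbox K.sig Ic str)
    (hct : ¬ IsCType K.tbox K.sig τ) {A : ℕ} {r : DLRole} {A' : ℕ}
    (hin : exIncl A r A' ∈ K.tbox) (hA : DLConcept.atom A ∈ τ) :
    ∃ τ' ∈ runTails K.tbox K.sig Ic str, IsType K.tbox τ' ∧
      LegalResponse K.tbox A r A' τ τ' := by
  obtain ⟨w, hrun, hfol, rfl⟩ := hτ
  obtain ⟨τ', hstr⟩ := (hnl.2 w hrun hfol).2 hct A r A' hin hA
  obtain ⟨-, -, hτ', B, s, B', heq, -, -, hleg⟩ := hnl.1 _ _ _ hstr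
  obtain ⟨rfl, rfl, rfl⟩ : A = B ∧ r = s ∧ A' = B' := by simpa [exIncl] using heq
  exact ⟨τ', ⟨_, hrun.snoc hin ⟨A, r, A', rfl⟩ hτ' hct, hfol.snoc hstr,
    GRun.tail_snoc w _⟩, hτ', hleg⟩

lemma IsCore.selfSupporting_runTails_union (hc : IsCore Ic K)
    (hnl : NonLosing K.tbox K.sig Ic str) :
    SelfSupporting K.tbox K.sig Ic (runTails K.tbox K.sig Ic str ∪ nonFringeTypes K.tbox Ic) where
  satN1 := by
    rintro τ (hτ | ⟨e, -, -, rfl⟩) α hα hn1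
    · exact (runTails_subset_LC hnl hτ).2.1 α hα hn1
    · exact typeSatN1_typeOf hα hn1 ((hc.c3 α hα).1 hn1.not_isExistential) e
  realized := by
    rintro τ (hτ | ⟨e, he, -, rfl⟩) hct
    · exact (runTails_subset_LC hnl hτ).2.2 hct
    · exact ⟨e, he, rfl⟩
  witness := by
    rintro τ (hτ | hτ) A r A' hin hA
    · by_cases hct : IsCType K.tbox K.sig τ
      · exact hc.exists_legalResponse_of_mem_nonFringeTypes
          (hc.mem_nonFringeTypes_of_isCType ((runTails_subset_LC hnl hτ).2.2 hct) hct) hin hA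
      · obtain ⟨τ', hτ'S, hτ'⟩ := exists_legalResponse_of_mem_runTails hnl hτ hct hin hA
        exact ⟨τ', Or.inl hτ'S, hτ'⟩
    · exact hc.exists_legalResponse_of_mem_nonFringeTypes hτ hin hA

end Marking

/-- Let `I_c` be a core for `K = (T, Σ, A)` with `T` in
normal form and `str` a non-losing strategy for Bob on `I_c`. For every type
`τ` over `T`: if `τ` is marked by `Mark(T, Σ, I_c)`, then there is no finite
run `w` following `str` with `tail(w) = τ`. -/
theorem stmt8_marked_no_run (K : KB) (hnf : NormalTBox K.tbox)
    (Ic : Interp) (hc : IsCore Ic K)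
    (str : Strategy) (hnl : NonLosing K.tbox K.sig Ic str)
    (τ : Set DLConcept) (hτ : IsType K.tbox τ)
    (hm : Marked K.tbox K.sig Ic τ) :
    ¬ ∃ w : GRun, IsRunOn K.tbox K.sig Ic w ∧ RunFollows K.tbox Ic str w ∧
        w.tail K.tbox Ic = τ :=
  fun hrun => (hc.selfSupporting_runTails_union hnl).not_marked hm (Or.inl hrun)
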